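/- arXiv:2204.02727 — 3 statements merged into one kernel-verified Lean document; each statement's English description precedes it below -/
import Mathlib

section
/- Let A be a nonnegative regular summability matrix, (X,d) a metric space, and x = (x_k) a sequence in X. If x is A-statistically convergent to μ ∈ X, then Λ_x^A = Γ_x^A = {μ}, i.e., μ is the unique A-statistical limit point and the unique A-statistical cluster point of x. -/
/-!
For `p ≠ μ` and `ε = d(p, μ)/2` the set `{k | d(x_k, p) < ε}` lies inside
`{k | ε ≤ d(x_k, μ)}`, which has `A`-density zero; so `p` is not a cluster point, nor a limit
point, since a limit point is a cluster point. Conversely the sets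
`M_j = {k | d(x_k, μ) < 1/(j+1)}` have `A`-density one, so for every `t` and `N` some row
`n ≥ N` of `A` puts weight `> 1/2` on a finite block `M_j ∩ [t, T)`. Choosing such blocks for
`j = 0, 1, 2, …` on consecutive intervals `[t_j, t_{j+1})`, their union `K` is not of
`A`-density zero, and `x → μ` along `K` because beyond `t_j` the set `K` stays inside `M_j`.
-/

open Filter Topology

/-- `a` is a nonnegative regular summability matrix. -/
def IsRegularMatrix (a : ℕ → ℕ → ℝ) : Prop :=
  (∀ n k, 0 ≤ a n k) ∧
  (∀ n, Summable (a n)) ∧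
  (∃ C : ℝ, ∀ n, ∑' k, a n k ≤ C) ∧
  (∀ k, Tendsto (fun n => a n k) atTop (𝓝 0)) ∧
  Tendsto (fun n => ∑' k, a n k) atTop (𝓝 1)

/-- The set `B ⊆ ℕ` has `A`-density `d`: `lim_n Σ_{k ∈ B} a n k = d`. -/
def HasADensity (a : ℕ → ℕ → ℝ) (B : Set ℕ) (d : ℝ) : Prop :=
  Tendsto (fun n => ∑' k, Set.indicator B (a n) k) atTop (𝓝 d)

/-- `x` is `A`-statistically convergent to `L`. -/
def AStatTendsto {X : Type*} [MetricSpace X] (a : ℕ → ℕ → ℝ) (x : ℕ → X) (L : X) : Prop :=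
  ∀ ε > 0, HasADensity a {k | ε ≤ dist (x k) L} 0

/-- `x` is `A`-statistically Cauchy. -/
def AStatCauchy {X : Type*} [MetricSpace X] (a : ℕ → ℕ → ℝ) (x : ℕ → X) : Prop :=
  ∀ ε > 0, ∃ k₀ : ℕ, HasADensity a {k | ε ≤ dist (x k) (x k₀)} 0

/-- `p` is an `A`-statistical limit point of `x`: some subsequence of `x` indexed by an
(infinite) index set not having `A`-density zero converges to `p`. -/
def AStatLimitPt {X : Type*} [MetricSpace X] (a : ℕ → ℕ → ℝ) (x : ℕ → X) (p : X) : Prop :=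
  ∃ q : ℕ → ℕ, StrictMono q ∧ ¬ HasADensity a (Set.range q) 0 ∧
    Tendsto (fun n => x (q n)) atTop (𝓝 p)

/-- `p` is an `A`-statistical cluster point of `x`. -/
def AStatClusterPt {X : Type*} [MetricSpace X] (a : ℕ → ℕ → ℝ) (x : ℕ → X) (p : X) : Prop :=
  ∀ ε > 0, ¬ HasADensity a {k | dist (x k) p < ε} 0

/-- `p` is an ordinary limit point of the sequence `x`: some subsequence converges to `p`. -/
def OrdLimitPt {X : Type*} [MetricSpace X] (x : ℕ → X) (p : X) : Prop :=
  ∃ q : ℕ → ℕ, StrictMono q ∧ Tendsto (fun n => x (q n)) atTop (𝓝 p)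

/-- `x` is strongly `A`-summable to `L`: `lim_j Σ_k a j k * d(x k, L) = 0`. -/
def StrongASummable {X : Type*} [MetricSpace X] (a : ℕ → ℕ → ℝ) (x : ℕ → X) (L : X) : Prop :=
  Tendsto (fun j => ∑' k, a j k * dist (x k) L) atTop (𝓝 0)

open Set

section Indicator

variable {ι : Type*} {f : ι → ℝ}

lemma tsum_indicator_mono (hf : 0 ≤ f) (hs : Summable f) {B C : Set ι} (hBC : B ⊆ C) :
    ∑' k, B.indicator f k ≤ ∑' k, C.indicator f k :=
  (hs.indicator B).tsum_mono (hs.indicator C) (indicator_le_indicator_of_subset hBC hf)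

lemma tsum_indicator_union_le (hf : 0 ≤ f) (hs : Summable f) (B C : Set ι) :
    ∑' k, (B ∪ C).indicator f k ≤ ∑' k, B.indicator f k + ∑' k, C.indicator f k := by
  rw [← (hs.indicator B).tsum_add (hs.indicator C)]
  refine (hs.indicator _).tsum_mono ((hs.indicator B).add (hs.indicator C)) fun k => ?_
  have hsplit := congrFun (indicator_union_add_inter f B C) k
  have hinter := indicator_nonneg (fun k _ => hf k) k (s := B ∩ C)
  simp only [Pi.add_apply] at hsplit ⊢
  linarith

end Indicator

section Density

variable {a : ℕ → ℕ → ℝ}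

lemma HasADensity.zero_of_subset (h0 : ∀ n k, 0 ≤ a n k) (hs : ∀ n, Summable (a n))
    {B C : Set ℕ} (hC : HasADensity a C 0) (hBC : B ⊆ C) : HasADensity a B 0 :=
  squeeze_zero (fun n => tsum_nonneg fun k => indicator_nonneg (fun k _ => h0 n k) k)
    (fun n => tsum_indicator_mono (h0 n) (hs n) hBC) hC

lemma HasADensity.union_zero (h0 : ∀ n k, 0 ≤ a n k) (hs : ∀ n, Summable (a n))
    {B C : Set ℕ} (hB : HasADensity a B 0) (hC : HasADensity a C 0) :
    HasADensity a (B ∪ C) 0 :=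
  squeeze_zero (fun n => tsum_nonneg fun k => indicator_nonneg (fun k _ => h0 n k) k)
    (fun n => tsum_indicator_union_le (h0 n) (hs n) B C) (by simpa using hB.add hC)

lemma hasADensity_zero_of_finite (hcol : ∀ k, Tendsto (fun n => a n k) atTop (𝓝 0))
    {B : Set ℕ} (hB : B.Finite) : HasADensity a B 0 := by
  obtain ⟨s, rfl⟩ := hB.exists_finset_coe
  have hsum : ∀ n, ∑' k, (s : Set ℕ).indicator (a n) k = ∑ k ∈ s, a n k := fun n => by
    rw [← tsum_subtype]
    exact s.tsum_subtype (a n)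
  simpa [HasADensity, hsum] using tendsto_finsetSum s fun k _ => hcol k

lemma HasADensity.compl (hs : ∀ n, Summable (a n))
    (htot : Tendsto (fun n => ∑' k, a n k) atTop (𝓝 1)) {B : Set ℕ}
    (hB : HasADensity a B 0) : HasADensity a Bᶜ 1 := by
  have hsub : ∀ n, ∑' k, Bᶜ.indicator (a n) k = ∑' k, a n k - ∑' k, B.indicator (a n) k :=
    fun n => by rw [indicator_compl, ← (hs n).tsum_sub ((hs n).indicator B)]; rfl
  simpa [HasADensity, hsub] using htot.sub hB

lemma exists_heavy_block (h0 : ∀ n k, 0 ≤ a n k) (hs : ∀ n, Summable (a n))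
    (hcol : ∀ k, Tendsto (fun n => a n k) atTop (𝓝 0)) {M : Set ℕ} (hM : HasADensity a M 1)
    (t N : ℕ) : ∃ T, t ≤ T ∧ ∃ n, N ≤ n ∧ 1 / 2 < ∑' k, (M ∩ Ico t T).indicator (a n) k := by
  have htail : ∀ᶠ n in atTop, 1 / 2 < ∑' k, (M ∩ Ici t).indicator (a n) k := by
    have hhead : HasADensity a (Iio t) 0 := hasADensity_zero_of_finite hcol (finite_Iio t)
    filter_upwards [hM.eventually (lt_mem_nhds (by norm_num : (3 / 4 : ℝ) < 1)),
      hhead.eventually (gt_mem_nhds (by norm_num : (0 : ℝ) < 1 / 4))] with n hbig hsmall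
    have hsplit : M ⊆ (M ∩ Ici t) ∪ Iio t := fun k hk => (lt_or_ge k t).elim Or.inr
      fun hkt => Or.inl ⟨hk, hkt⟩
    have := (tsum_indicator_mono (h0 n) (hs n) hsplit).trans
      (tsum_indicator_union_le (h0 n) (hs n) _ _)
    linarith
  obtain ⟨n, hn, hNn⟩ := (htail.and (eventually_ge_atTop N)).exists
  have hpartial := ((hs n).indicator (M ∩ Ici t)).hasSum.tendsto_sum_nat
  obtain ⟨T, hT, htT⟩ := ((hpartial.eventually (lt_mem_nhds hn)).and (eventually_ge_atTop t)).exists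
  refine ⟨T, htT, n, hNn, hT.trans_le ?_⟩
  calc ∑ k ∈ Finset.range T, (M ∩ Ici t).indicator (a n) k
      = ∑ k ∈ Finset.range T, (M ∩ Ico t T).indicator (a n) k := by
        refine Finset.sum_congr rfl fun k hk => ?_
        have hkT := Finset.mem_range.mp hk
        by_cases hkM : k ∈ M <;> by_cases htk : t ≤ k <;> simp [hkM, htk, hkT]
    _ ≤ ∑' k, (M ∩ Ico t T).indicator (a n) k :=
        ((hs n).indicator _).sum_le_tsum _ fun k _ => indicator_nonneg (fun k _ => h0 n k) k

lemma exists_not_hasADensity_zero_eventually_mem (h0 : ∀ n k, 0 ≤ a n k)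
    (hs : ∀ n, Summable (a n)) (hcol : ∀ k, Tendsto (fun n => a n k) atTop (𝓝 0))
    {M : ℕ → Set ℕ} (hanti : Antitone M) (hM : ∀ j, HasADensity a (M j) 1) :
    ∃ K : Set ℕ, ¬ HasADensity a K 0 ∧ ∀ j, ∀ᶠ k in atTop ⊓ 𝓟 K, k ∈ M j := by
  choose T hT n hn hblock using fun j t => exists_heavy_block h0 hs hcol (hM j) t j
  let t : ℕ → ℕ := fun j => Nat.rec 0 (fun j tj => T j tj) j
  have ht : Monotone t := monotone_nat_of_le_succ fun j => hT j (t j)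
  refine ⟨⋃ j, M j ∩ Ico (t j) (t (j + 1)), fun hK => ?_, fun J => ?_⟩
  · have hrows : Tendsto (fun j => n j (t j)) atTop atTop :=
      tendsto_atTop_mono (fun j => hn j (t j)) tendsto_id
    obtain ⟨j, hj⟩ := ((hK.comp hrows).eventually (gt_mem_nhds one_half_pos)).exists
    have hle := tsum_indicator_mono (h0 (n j (t j))) (hs _)
      (subset_iUnion (fun j => M j ∩ Ico (t j) (t (j + 1))) j)
    exact (hblock j (t j)).not_ge (hle.trans hj.le)
  · rw [eventually_inf_principal]
    filter_upwards [eventually_ge_atTop (t J)] with k hJk hkK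
    obtain ⟨j, hkM, -, hkj⟩ := mem_iUnion.mp hkK
    have hJj : J ≤ j := by
      by_contra! hjJ
      exact (ht (Nat.succ_le_of_lt hjJ)).not_gt (hJk.trans_lt hkj)
    exact hanti hJj hkM

end Density

section Statistical

variable {X : Type*} [MetricSpace X] {a : ℕ → ℕ → ℝ} {x : ℕ → X} {μ p : X}

lemma AStatLimitPt.aStatClusterPt (h0 : ∀ n k, 0 ≤ a n k) (hs : ∀ n, Summable (a n))
    (hcol : ∀ k, Tendsto (fun n => a n k) atTop (𝓝 0)) (hp : AStatLimitPt a x p) :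
    AStatClusterPt a x p := by
  obtain ⟨q, -, hK, hqp⟩ := hp
  intro ε hε hball
  obtain ⟨N, hN⟩ := Metric.tendsto_atTop.mp hqp ε hε
  refine hK (((hasADensity_zero_of_finite hcol ((finite_Iio N).image q)).union_zero h0 hs
    hball).zero_of_subset h0 hs ?_)
  rintro - ⟨n, rfl⟩
  rcases lt_or_ge n N with hn | hn
  · exact Or.inl ⟨n, hn, rfl⟩
  · exact Or.inr (hN n hn)

lemma aStatLimitPt_of_tendsto_inf_principal (hcol : ∀ k, Tendsto (fun n => a n k) atTop (𝓝 0))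
    {K : Set ℕ} (hK : ¬ HasADensity a K 0) (hx : Tendsto x (atTop ⊓ 𝓟 K) (𝓝 p)) :
    AStatLimitPt a x p := by
  classical
  have : Infinite K := infinite_coe_iff.mpr fun hfin => hK (hasADensity_zero_of_finite hcol hfin)
  let q := Nat.orderEmbeddingOfSet K
  have hqK : range q = K := Nat.orderEmbeddingOfSet_range K
  refine ⟨q, q.strictMono, hqK ▸ hK, hx.comp (tendsto_inf.mpr ⟨q.strictMono.tendsto_atTop, ?_⟩)⟩
  exact tendsto_principal.mpr (Eventually.of_forall fun n => hqK ▸ mem_range_self n)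

lemma AStatTendsto.aStatClusterPt (hs : ∀ n, Summable (a n))
    (htot : Tendsto (fun n => ∑' k, a n k) atTop (𝓝 1)) (h : AStatTendsto a x μ) :
    AStatClusterPt a x μ := by
  intro ε hε hball
  have hnear : HasADensity a {k | dist (x k) μ < ε} 1 := by
    simpa [compl_ofPred, not_le] using (h ε hε).compl hs htot
  exact zero_ne_one (tendsto_nhds_unique hball hnear)

lemma AStatTendsto.eq_of_aStatClusterPt (h0 : ∀ n k, 0 ≤ a n k) (hs : ∀ n, Summable (a n))
    (h : AStatTendsto a x μ) (hp : AStatClusterPt a x p) : p = μ := by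
  by_contra hne
  have hε : 0 < dist p μ / 2 := half_pos (dist_pos.mpr hne)
  refine hp _ hε ((h _ hε).zero_of_subset h0 hs fun k (hk : dist (x k) p < _) => ?_)
  have := dist_triangle_left p μ (x k)
  change _ ≤ dist (x k) μ
  linarith

lemma AStatTendsto.aStatLimitPt (h0 : ∀ n k, 0 ≤ a n k) (hs : ∀ n, Summable (a n))
    (hcol : ∀ k, Tendsto (fun n => a n k) atTop (𝓝 0))
    (htot : Tendsto (fun n => ∑' k, a n k) atTop (𝓝 1)) (h : AStatTendsto a x μ) :
    AStatLimitPt a x μ := by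
  let M : ℕ → Set ℕ := fun j => {k | dist (x k) μ < 1 / (j + 1)}
  have hanti : Antitone M := fun i j hij k hk => by
    change dist (x k) μ < 1 / ((i : ℝ) + 1)
    exact hk.trans_le
      (one_div_le_one_div_of_le (by positivity) (by exact_mod_cast Nat.succ_le_succ hij))
  have hM : ∀ j, HasADensity a (M j) 1 := fun j => by
    simpa [M, compl_ofPred, not_le] using (h _ (Nat.one_div_pos_of_nat (n := j))).compl hs htot
  obtain ⟨K, hK, hKM⟩ := exists_not_hasADensity_zero_eventually_mem h0 hs hcol hanti hM
  refine aStatLimitPt_of_tendsto_inf_principal hcol hK (Metric.tendsto_nhds.mpr fun ε hε => ?_)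
  obtain ⟨j, hj⟩ := exists_nat_one_div_lt hε
  exact (hKM j).mono fun k (hk : _ < _) => hk.trans hj

end Statistical

theorem stmt11 {X : Type*} [MetricSpace X] {a : ℕ → ℕ → ℝ} (hA : IsRegularMatrix a)
    {x : ℕ → X} {μ : X} (h : AStatTendsto a x μ) :
    {p | AStatLimitPt a x p} = {μ} ∧ {p | AStatClusterPt a x p} = {μ} := by
  obtain ⟨h0, hs, -, hcol, htot⟩ := hA
  have hcluster : {p | AStatClusterPt a x p} = {μ} := eq_singleton_iff_unique_mem.mpr
    ⟨h.aStatClusterPt hs htot, fun p hp => h.eq_of_aStatClusterPt h0 hs hp⟩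
  refine ⟨eq_singleton_iff_unique_mem.mpr ⟨h.aStatLimitPt h0 hs hcol htot, fun p hp => ?_⟩,
    hcluster⟩
  exact hcluster.subset (AStatLimitPt.aStatClusterPt h0 hs hcol hp)
end

section
/- Let A be a nonnegative regular summability matrix, (X,d) a metric space, and x = (x_k), y = (y_k) sequences in X with δ_A({k ∈ ℕ : x_k ≠ y_k}) = 0. Then Λ_x^A = Λ_y^A and Γ_x^A = Γ_y^A, i.e., x and y have the same A-statistical limit points and the same A-statistical cluster points. -/
open Filter Topology

lemma dens_subset {a : ℕ → ℕ → ℝ} (h0 : ∀ n k, 0 ≤ a n k) (hs : ∀ n, Summable (a n))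
    {B C : Set ℕ} (hBC : B ⊆ C) (hC : HasADensity a C 0) : HasADensity a B 0 := by
  refine squeeze_zero (fun n => tsum_nonneg fun k => Set.indicator_nonneg (fun k _ => h0 n k) k)
    (fun n => Summable.tsum_le_tsum (fun k => ?_) ((hs n).indicator B) ((hs n).indicator C)) hC
  exact Set.indicator_le_indicator_of_subset hBC (fun k => h0 n k) k

lemma dens_union {a : ℕ → ℕ → ℝ} (h0 : ∀ n k, 0 ≤ a n k) (hs : ∀ n, Summable (a n))
    {B C : Set ℕ} (hB : HasADensity a B 0) (hC : HasADensity a C 0) :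
    HasADensity a (B ∪ C) 0 := by
  have key : ∀ n, ∑' k, Set.indicator (B ∪ C) (a n) k ≤
      (∑' k, Set.indicator B (a n) k) + ∑' k, Set.indicator C (a n) k := by
    intro n
    rw [← Summable.tsum_add ((hs n).indicator B) ((hs n).indicator C)]
    refine Summable.tsum_le_tsum (fun k => ?_) ((hs n).indicator (B ∪ C))
      (((hs n).indicator B).add ((hs n).indicator C))
    classical
    by_cases hb : k ∈ B <;> by_cases hc : k ∈ C <;>
      simp [Set.indicator_apply, Set.mem_union, hb, hc, h0 n k]
  have hsum : Tendsto (fun n => (∑' k, Set.indicator B (a n) k) +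
      ∑' k, Set.indicator C (a n) k) atTop (𝓝 0) := by
    simpa using hB.add hC
  exact squeeze_zero
    (fun n => tsum_nonneg fun k => Set.indicator_nonneg (fun k _ => h0 n k) k) key hsum

lemma dens_finite {a : ℕ → ℕ → ℝ} (hcol : ∀ k, Tendsto (fun n => a n k) atTop (𝓝 0))
    {B : Set ℕ} (hB : B.Finite) : HasADensity a B 0 := by
  have heq : ∀ n, ∑' k, Set.indicator B (a n) k = ∑ k ∈ hB.toFinset, a n k := by
    intro n
    rw [tsum_eq_sum (s := hB.toFinset)
      (fun k hk => Set.indicator_of_notMem (by simpa using hk) _)]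
    exact Finset.sum_congr rfl fun k hk => Set.indicator_of_mem (by simpa using hk) _
  have h2 := tendsto_finset_sum hB.toFinset (fun k _ => hcol k)
  have h3 : Tendsto (fun n => ∑ k ∈ hB.toFinset, a n k) atTop (𝓝 0) := by simpa using h2
  unfold HasADensity
  simpa only [heq] using h3

lemma limitPt_mono {X : Type*} [MetricSpace X] {a : ℕ → ℕ → ℝ} (hA : IsRegularMatrix a)
    {x y : ℕ → X} (hxy : HasADensity a {k | x k ≠ y k} 0) {p : X}
    (hp : AStatLimitPt a x p) : AStatLimitPt a y p := by
  obtain ⟨h0, hs, -, hcol, -⟩ := hA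
  obtain ⟨q, hq, hqd, hqc⟩ := hp
  set K₁ : Set ℕ := Set.range q ∩ {k | x k = y k} with hK₁
  set K₂ : Set ℕ := Set.range q ∩ {k | x k ≠ y k} with hK₂
  have hK₂d : HasADensity a K₂ 0 := dens_subset h0 hs Set.inter_subset_right hxy
  have hcover : Set.range q = K₁ ∪ K₂ := by
    ext k
    constructor
    · intro hk
      by_cases h : x k = y k
      · exact Or.inl ⟨hk, h⟩
      · exact Or.inr ⟨hk, h⟩
    · rintro (⟨hk, -⟩ | ⟨hk, -⟩) <;> exact hk
  have hK₁d : ¬ HasADensity a K₁ 0 := by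
    intro h
    exact hqd (by rw [hcover]; exact dens_union h0 hs h hK₂d)
  have hK₁inf : K₁.Infinite := by
    intro hfin
    exact hK₁d (dens_finite hcol hfin)
  have hK₁inf' : {k | k ∈ K₁}.Infinite := by simpa using hK₁inf
  set q' : ℕ → ℕ := Nat.nth (· ∈ K₁) with hq'
  have hq'mono : StrictMono q' := Nat.nth_strictMono hK₁inf'
  have hq'range : Set.range q' = K₁ := by
    have := Nat.range_nth_of_infinite hK₁inf'
    simpa using this
  have hq'mem : ∀ n, q' n ∈ K₁ := fun n => hq'range ▸ Set.mem_range_self n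
  -- extract the index map into q
  have hex : ∀ n, ∃ m, q m = q' n := fun n => (hq'mem n).1
  choose m hm using hex
  have hmmono : StrictMono m := by
    intro i j hij
    have : q (m i) < q (m j) := by rw [hm i, hm j]; exact hq'mono hij
    exact hq.lt_iff_lt.mp this
  refine ⟨q', hq'mono, by rw [hq'range]; exact hK₁d, ?_⟩
  have : Tendsto (fun n => x (q (m n))) atTop (𝓝 p) :=
    hqc.comp hmmono.tendsto_atTop
  have heq : (fun n => y (q' n)) = fun n => x (q (m n)) := by
    funext n
    rw [hm n]
    exact ((hq'mem n).2).symm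
  rw [heq]
  exact this

lemma clusterPt_mono {X : Type*} [MetricSpace X] {a : ℕ → ℕ → ℝ} (hA : IsRegularMatrix a)
    {x y : ℕ → X} (hxy : HasADensity a {k | x k ≠ y k} 0) {p : X}
    (hp : AStatClusterPt a x p) : AStatClusterPt a y p := by
  obtain ⟨h0, hs, -, -, -⟩ := hA
  intro ε hε hdy
  refine hp ε hε ?_
  have hsub : {k | dist (x k) p < ε} ⊆ {k | dist (y k) p < ε} ∪ {k | x k ≠ y k} := by
    intro k hk
    by_cases h : x k = y k
    · exact Or.inl (by simpa [← h] using hk)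
    · exact Or.inr h
  exact dens_subset h0 hs hsub (dens_union h0 hs hdy hxy)

theorem stmt12 {X : Type*} [MetricSpace X] {a : ℕ → ℕ → ℝ} (hA : IsRegularMatrix a)
    {x y : ℕ → X} (hxy : HasADensity a {k | x k ≠ y k} 0) :
    {p | AStatLimitPt a x p} = {p | AStatLimitPt a y p} ∧
    {p | AStatClusterPt a x p} = {p | AStatClusterPt a y p} := by
  have hxy' : HasADensity a {k | y k ≠ x k} 0 := by
    have : {k | y k ≠ x k} = {k | x k ≠ y k} := by ext k; exact ne_comm
    rw [this]; exact hxy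
  constructor
  · ext p
    exact ⟨fun h => limitPt_mono hA hxy h, fun h => limitPt_mono hA hxy' h⟩
  · ext p
    exact ⟨fun h => clusterPt_mono hA hxy h, fun h => clusterPt_mono hA hxy' h⟩
end

section
/- Let A be a nonnegative regular summability matrix, (X,d) a metric space, x = (x_k) a sequence in X, and C a compact subset of X such that C ∩ Γ_x^A = ∅ (no point of C is an A-statistical cluster point of x). Then δ_A({k ∈ ℕ : x_k ∈ C}) = 0. -/
open Filter Topology

lemma density_zero_mono {a : ℕ → ℕ → ℝ} (ha0 : ∀ n k, 0 ≤ a n k)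
    (hs : ∀ n, Summable (a n)) {B B' : Set ℕ} (hBB' : B ⊆ B')
    (h : HasADensity a B' 0) : HasADensity a B 0 := by
  refine squeeze_zero (fun n => tsum_nonneg fun k => Set.indicator_nonneg (fun k _ => ha0 n k) k)
    (fun n => Summable.tsum_le_tsum ?_ ((hs n).indicator B) ((hs n).indicator B')) h
  intro k
  by_cases hk : k ∈ B
  · simp [Set.indicator_of_mem hk, Set.indicator_of_mem (hBB' hk)]
  · simp [Set.indicator_of_notMem hk, Set.indicator_nonneg (fun k _ => ha0 n k) k]

lemma density_zero_union {a : ℕ → ℕ → ℝ} (ha0 : ∀ n k, 0 ≤ a n k)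
    (hs : ∀ n, Summable (a n)) {B B' : Set ℕ}
    (h : HasADensity a B 0) (h' : HasADensity a B' 0) :
    HasADensity a (B ∪ B') 0 := by
  have key : Tendsto (fun n => (∑' k, Set.indicator B (a n) k) + ∑' k, Set.indicator B' (a n) k)
      atTop (𝓝 0) := by
    simpa using h.add h'
  refine squeeze_zero
    (fun n => tsum_nonneg fun k => Set.indicator_nonneg (fun k _ => ha0 n k) k) (fun n => ?_) key
  rw [← Summable.tsum_add ((hs n).indicator B) ((hs n).indicator B')]
  refine Summable.tsum_le_tsum (fun k => ?_) ((hs n).indicator (B ∪ B'))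
    (((hs n).indicator B).add ((hs n).indicator B'))
  by_cases hk : k ∈ B <;> by_cases hk' : k ∈ B' <;>
    simp_all [Set.indicator] <;> linarith [ha0 n k]

lemma density_zero_biUnion {a : ℕ → ℕ → ℝ} (ha0 : ∀ n k, 0 ≤ a n k)
    (hs : ∀ n, Summable (a n)) {ι : Type*} (s : Finset ι) (B : ι → Set ℕ)
    (h : ∀ i ∈ s, HasADensity a (B i) 0) : HasADensity a (⋃ i ∈ s, B i) 0 := by
  classical
  induction s using Finset.induction_on with
  | empty =>
      simp only [Finset.notMem_empty, Set.iUnion_of_empty, Set.iUnion_empty]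
      unfold HasADensity
      simpa using tendsto_const_nhds (α := ℝ) (f := atTop (α := ℕ))
  | @insert i s hx ih =>
      rw [Finset.set_biUnion_insert]
      exact density_zero_union ha0 hs (h i (Finset.mem_insert_self i s))
        (ih fun j hj => h j (Finset.mem_insert_of_mem hj))

theorem stmt14 {X : Type*} [MetricSpace X] {a : ℕ → ℕ → ℝ} (hA : IsRegularMatrix a)
    {x : ℕ → X} {C : Set X} (hC : IsCompact C)
    (hdisj : C ∩ {p | AStatClusterPt a x p} = ∅) :
    HasADensity a {k | x k ∈ C} 0 := by
  obtain ⟨ha0, hs, -, -, -⟩ := hA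
  have hnc : ∀ p ∈ C, ∃ ε > 0, HasADensity a {k | dist (x k) p < ε} 0 := by
    intro p hp
    have hncl : ¬ AStatClusterPt a x p := by
      intro h
      have : p ∈ C ∩ {p | AStatClusterPt a x p} := ⟨hp, h⟩
      rw [hdisj] at this
      exact this
    unfold AStatClusterPt at hncl
    push_neg at hncl
    exact hncl
  choose! ε hε hδ using hnc
  obtain ⟨t, ht⟩ := hC.elim_finite_subcover (fun p : C => Metric.ball (p : X) (ε p))
    (fun p => Metric.isOpen_ball)
    (fun q hq => Set.mem_iUnion.2 ⟨⟨q, hq⟩, Metric.mem_ball_self (hε q hq)⟩)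
  refine density_zero_mono ha0 hs ?_
    (density_zero_biUnion ha0 hs t (fun p : C => {k | dist (x k) (p : X) < ε p})
      (fun p _ => hδ p p.2))
  intro k hk
  obtain ⟨p, hp, hkp⟩ := Set.mem_iUnion₂.1 (ht hk)
  exact Set.mem_iUnion₂.2 ⟨p, hp, hkp⟩
end
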